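/- Define Q(X12,X13,X23) = X12⁴ − 2·X12²·X13² − 2·X12²·X23² + X13⁴ − 2·X13²·X23² + X23⁴ + 4·X23² and S(X12,X13,X23) = X12² + X13² − X23² − 2. Let U ⊂ ℝ³ be the open set of points with X12 ≠ 0, X13 ≠ 0, Q > 0, S ≠ 0 and √Q < |S|, and define F = −2·arctanh(√Q / S) / √Q on U. Then F is smooth on U and at every point of U it satisfies ℋ F − (d(dF) + 5·dF + 6·F) = 0. -/

import Mathlib

/-- The real inverse hyperbolic tangent, `arctanh x = ½·log((1+x)/(1−x))`
(the inverse of `tanh` on `(−1,1)`). -/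
noncomputable def arctanh (x : ℝ) : ℝ := (1 / 2) * Real.log ((1 + x) / (1 - x))

/-- Partial derivatives of a (curried) function of three real variables. -/
noncomputable def q1 (f : ℝ → ℝ → ℝ → ℝ) (x y z : ℝ) : ℝ := deriv (fun t => f t y z) x
noncomputable def q2 (f : ℝ → ℝ → ℝ → ℝ) (x y z : ℝ) : ℝ := deriv (fun t => f x t z) y
noncomputable def q3 (f : ℝ → ℝ → ℝ → ℝ) (x y z : ℝ) : ℝ := deriv (fun t => f x y t) z

/-- The operator `ℋ = Ĥ1^{(−2)}` (variables `x = X12`, `y = X13`, `z = X23`):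
`ℋF = F_xx + F_yy + ((x²+y²−z²)/(xy))·F_xy + (2/x)·F_x + (2/y)·F_y`. -/
noncomputable def Hop (f : ℝ → ℝ → ℝ → ℝ) (x y z : ℝ) : ℝ :=
  q1 (q1 f) x y z + q2 (q2 f) x y z +
    ((x ^ 2 + y ^ 2 - z ^ 2) / (x * y)) * q1 (q2 f) x y z +
    (2 / x) * q1 f x y z + (2 / y) * q2 f x y z

/-- The Euler operator `d F = x·F_x + y·F_y + z·F_z`. -/
noncomputable def dOp (f : ℝ → ℝ → ℝ → ℝ) (x y z : ℝ) : ℝ :=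
  x * q1 f x y z + y * q2 f x y z + z * q3 f x y z

/-- `Q = X12⁴ − 2X12²X13² − 2X12²X23² + X13⁴ − 2X13²X23² + X23⁴ + 4X23²`. -/
def Qpoly (x y z : ℝ) : ℝ :=
  x ^ 4 - 2 * x ^ 2 * y ^ 2 - 2 * x ^ 2 * z ^ 2 + y ^ 4 - 2 * y ^ 2 * z ^ 2 + z ^ 4 +
    4 * z ^ 2

/-- `S = X12² + X13² − X23² − 2`. -/
def Spoly (x y z : ℝ) : ℝ := x ^ 2 + y ^ 2 - z ^ 2 - 2

/-- The open set `U`. -/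
def Uset : Set (ℝ × ℝ × ℝ) :=
  {v | v.1 ≠ 0 ∧ v.2.1 ≠ 0 ∧ 0 < Qpoly v.1 v.2.1 v.2.2 ∧ Spoly v.1 v.2.1 v.2.2 ≠ 0 ∧
       Real.sqrt (Qpoly v.1 v.2.1 v.2.2) < |Spoly v.1 v.2.1 v.2.2|}

/-- `F = −2·arctanh(√Q / S) / √Q`. -/
noncomputable def Ffun (x y z : ℝ) : ℝ :=
  -2 * arctanh (Real.sqrt (Qpoly x y z) / Spoly x y z) / Real.sqrt (Qpoly x y z)


section AuxOmega

open Filter Topology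

lemma hasDerivAt_arctanh {x : ℝ} (h : x ^ 2 < 1) :
    HasDerivAt arctanh (1 / (1 - x ^ 2)) x := by
  have h1 : (0:ℝ) < 1 - x := by nlinarith
  have h2 : (0:ℝ) < 1 + x := by nlinarith
  have hd : HasDerivAt (fun t : ℝ => (1 + t) / (1 - t))
      ((1 * (1 - x) - (1 + x) * (-1)) / (1 - x) ^ 2) x :=
    ((hasDerivAt_id x).const_add 1).div ((hasDerivAt_id x).const_sub 1) h1.ne'
  have hne : (1 + x) / (1 - x) ≠ 0 := by positivity
  have := (hd.log hne).const_mul (1/2 : ℝ)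
  unfold arctanh
  refine this.congr_deriv ?_
  have h3 : 1 - x ^ 2 ≠ 0 := by nlinarith
  field_simp
  ring

noncomputable def Phi (q s A B w : ℝ) : ℝ :=
  (-s * A + 2 * q * B) / (q * (s ^ 2 - q)) - A / (2 * q) * w

noncomputable def Psi (q s A B qd sd ad bd w : ℝ) : ℝ :=
  ((-sd * A + -s * ad + (2 * qd * B + 2 * q * bd)) * (q * (s ^ 2 - q)) -
      (-s * A + 2 * q * B) * (qd * (s ^ 2 - q) + q * (2 * s * sd - qd))) /
    (q * (s ^ 2 - q)) ^ 2 -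
  ((ad * (2 * q) - A * (2 * qd)) / (2 * q) ^ 2 * w + A / (2 * q) * Phi q s qd sd w)

lemma hasDerivAt_W {Qf Sf : ℝ → ℝ} {q' s' t : ℝ}
    (hQ : HasDerivAt Qf q' t) (hS : HasDerivAt Sf s' t)
    (hq : 0 < Qf t) (hs : Sf t ≠ 0) (hlt : Qf t < (Sf t) ^ 2) :
    HasDerivAt (fun u => -2 * arctanh (Real.sqrt (Qf u) / Sf u) / Real.sqrt (Qf u))
      (Phi (Qf t) (Sf t) q' s'
        (-2 * arctanh (Real.sqrt (Qf t) / Sf t) / Real.sqrt (Qf t))) t := by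
  have hr0 : 0 < Real.sqrt (Qf t) := Real.sqrt_pos.mpr hq
  have hr2 : Real.sqrt (Qf t) ^ 2 = Qf t := Real.sq_sqrt hq.le
  have hrd : HasDerivAt (fun u => Real.sqrt (Qf u)) (q' / (2 * Real.sqrt (Qf t))) t :=
    hQ.sqrt hq.ne'
  have hu : HasDerivAt (fun u => Real.sqrt (Qf u) / Sf u)
      ((q' / (2 * Real.sqrt (Qf t)) * Sf t - Real.sqrt (Qf t) * s') / (Sf t) ^ 2) t :=
    hrd.div hS hs
  have hu2 : (Real.sqrt (Qf t) / Sf t) ^ 2 < 1 := by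
    rw [div_pow, hr2]
    exact (div_lt_one (by positivity)).mpr hlt
  have ha := (hasDerivAt_arctanh hu2).comp t hu
  have hfin := (ha.const_mul (-2 : ℝ)).div hrd hr0.ne'
  refine hfin.congr_deriv ?_
  set r := Real.sqrt (Qf t) with hrdef
  set a := arctanh (r / Sf t) with hadef
  rw [← hr2]
  have hD : (Sf t) ^ 2 - r ^ 2 ≠ 0 := by rw [hr2]; nlinarith
  have h1 : 1 - (r / Sf t) ^ 2 ≠ 0 := by
    have : (r / Sf t) ^ 2 < 1 := hu2
    nlinarith
  simp only [Phi, Function.comp]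
  field_simp
  ring

lemma hasDerivAt_Phi {Qf Sf Af Bf : ℝ → ℝ} {q' s' a' b' t : ℝ}
    (hQ : HasDerivAt Qf q' t) (hS : HasDerivAt Sf s' t)
    (hA : HasDerivAt Af a' t) (hB : HasDerivAt Bf b' t)
    (hq : 0 < Qf t) (hs : Sf t ≠ 0) (hlt : Qf t < (Sf t) ^ 2) :
    HasDerivAt (fun u => Phi (Qf u) (Sf u) (Af u) (Bf u)
        (-2 * arctanh (Real.sqrt (Qf u) / Sf u) / Real.sqrt (Qf u)))
      (Psi (Qf t) (Sf t) (Af t) (Bf t) q' s' a' b'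
        (-2 * arctanh (Real.sqrt (Qf t) / Sf t) / Real.sqrt (Qf t))) t := by
  have hD1ne : Qf t * ((Sf t) ^ 2 - Qf t) ≠ 0 := by
    have : (Sf t) ^ 2 - Qf t > 0 := by nlinarith
    positivity
  have hN1 : HasDerivAt (fun u => -Sf u * Af u + 2 * Qf u * Bf u)
      (-s' * Af t + -Sf t * a' + (2 * q' * Bf t + 2 * Qf t * b')) t := by
    have h1 := hS.neg.mul hA
    have h2 := (hQ.const_mul 2).mul hB
    exact h1.add h2
  have hD1 : HasDerivAt (fun u => Qf u * ((Sf u) ^ 2 - Qf u))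
      (q' * ((Sf t) ^ 2 - Qf t) + Qf t * (2 * Sf t * s' - q')) t := by
    have h2 : HasDerivAt (fun u => (Sf u) ^ 2 - Qf u) (2 * Sf t * s' - q') t := by
      have := (hS.pow 2).sub hQ
      exact this.congr_deriv (by norm_num)
    exact hQ.mul h2
  have hT1 := hN1.div hD1 hD1ne
  have hc : HasDerivAt (fun u => Af u / (2 * Qf u))
      ((a' * (2 * Qf t) - Af t * (2 * q')) / (2 * Qf t) ^ 2) t :=
    hA.div (hQ.const_mul 2) (by positivity)
  have hW := hasDerivAt_W hQ hS hq hs hlt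
  have := hT1.sub (hc.mul hW)
  simp only [Phi, Psi]
  exact this

lemma hd4 (a b c d e x : ℝ) :
    HasDerivAt (fun t => a * t ^ 4 + b * t ^ 3 + c * t ^ 2 + d * t + e)
      (4 * a * x ^ 3 + 3 * b * x ^ 2 + 2 * c * x + d) x := by
  have h :=
    (((((hasDerivAt_pow 4 x).const_mul a).add ((hasDerivAt_pow 3 x).const_mul b)).add
          ((hasDerivAt_pow 2 x).const_mul c)).add ((hasDerivAt_id x).const_mul d)).add_const e
  refine h.congr_deriv ?_
  push_cast
  ring

def PQ1 (x y z : ℝ) : ℝ := 4 * x ^ 3 - 4 * x * y ^ 2 - 4 * x * z ^ 2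
def PQ2 (x y z : ℝ) : ℝ := 4 * y ^ 3 - 4 * y * x ^ 2 - 4 * y * z ^ 2
def PQ3 (x y z : ℝ) : ℝ := 4 * z ^ 3 - 4 * z * x ^ 2 - 4 * z * y ^ 2 + 8 * z


lemma hQ_1 (x y z : ℝ) : HasDerivAt (fun t => Qpoly t y z) (PQ1 x y z) x := by
  have h := hd4 (1) (0) (-2 * y ^ 2 - 2 * z ^ 2) (0) (y ^ 4 - 2 * y ^ 2 * z ^ 2 + z ^ 4 + 4 * z ^ 2) x
  have e1 : (fun t : ℝ => Qpoly t y z) = fun t =>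
      (1) * t ^ 4 + (0) * t ^ 3 + (-2 * y ^ 2 - 2 * z ^ 2) * t ^ 2 + (0) * t + (y ^ 4 - 2 * y ^ 2 * z ^ 2 + z ^ 4 + 4 * z ^ 2) := by
    funext t; try simp only [Qpoly, Spoly, PQ1, PQ2, PQ3]
    ring
  have e2 : (PQ1 x y z) = 4 * (1) * x ^ 3 + 3 * (0) * x ^ 2 + 2 * (-2 * y ^ 2 - 2 * z ^ 2) * x + (0) := by
    try simp only [PQ1, PQ2, PQ3]
    ring
  rw [e1, e2]; exact h

lemma hS_1 (x y z : ℝ) : HasDerivAt (fun t => Spoly t y z) (2 * x) x := by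
  have h := hd4 (0) (0) (1) (0) (y ^ 2 - z ^ 2 - 2) x
  have e1 : (fun t : ℝ => Spoly t y z) = fun t =>
      (0) * t ^ 4 + (0) * t ^ 3 + (1) * t ^ 2 + (0) * t + (y ^ 2 - z ^ 2 - 2) := by
    funext t; try simp only [Qpoly, Spoly, PQ1, PQ2, PQ3]
    ring
  have e2 : (2 * x) = 4 * (0) * x ^ 3 + 3 * (0) * x ^ 2 + 2 * (1) * x + (0) := by
    try simp only [PQ1, PQ2, PQ3]
    ring
  rw [e1, e2]; exact h

lemma hPQ1_1 (x y z : ℝ) : HasDerivAt (fun t => PQ1 t y z) (12 * x ^ 2 - 4 * y ^ 2 - 4 * z ^ 2) x := by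
  have h := hd4 (0) (4) (0) (-4 * y ^ 2 - 4 * z ^ 2) (0) x
  have e1 : (fun t : ℝ => PQ1 t y z) = fun t =>
      (0) * t ^ 4 + (4) * t ^ 3 + (0) * t ^ 2 + (-4 * y ^ 2 - 4 * z ^ 2) * t + (0) := by
    funext t; try simp only [Qpoly, Spoly, PQ1, PQ2, PQ3]
    ring
  have e2 : (12 * x ^ 2 - 4 * y ^ 2 - 4 * z ^ 2) = 4 * (0) * x ^ 3 + 3 * (4) * x ^ 2 + 2 * (0) * x + (-4 * y ^ 2 - 4 * z ^ 2) := by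
    try simp only [PQ1, PQ2, PQ3]
    ring
  rw [e1, e2]; exact h

lemma hPQ2_1 (x y z : ℝ) : HasDerivAt (fun t => PQ2 t y z) (-8 * x * y) x := by
  have h := hd4 (0) (0) (-4 * y) (0) (4 * y ^ 3 - 4 * y * z ^ 2) x
  have e1 : (fun t : ℝ => PQ2 t y z) = fun t =>
      (0) * t ^ 4 + (0) * t ^ 3 + (-4 * y) * t ^ 2 + (0) * t + (4 * y ^ 3 - 4 * y * z ^ 2) := by
    funext t; try simp only [Qpoly, Spoly, PQ1, PQ2, PQ3]
    ring
  have e2 : (-8 * x * y) = 4 * (0) * x ^ 3 + 3 * (0) * x ^ 2 + 2 * (-4 * y) * x + (0) := by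
    try simp only [PQ1, PQ2, PQ3]
    ring
  rw [e1, e2]; exact h

lemma hPQ3_1 (x y z : ℝ) : HasDerivAt (fun t => PQ3 t y z) (-8 * x * z) x := by
  have h := hd4 (0) (0) (-4 * z) (0) (4 * z ^ 3 - 4 * z * y ^ 2 + 8 * z) x
  have e1 : (fun t : ℝ => PQ3 t y z) = fun t =>
      (0) * t ^ 4 + (0) * t ^ 3 + (-4 * z) * t ^ 2 + (0) * t + (4 * z ^ 3 - 4 * z * y ^ 2 + 8 * z) := by
    funext t; try simp only [Qpoly, Spoly, PQ1, PQ2, PQ3]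
    ring
  have e2 : (-8 * x * z) = 4 * (0) * x ^ 3 + 3 * (0) * x ^ 2 + 2 * (-4 * z) * x + (0) := by
    try simp only [PQ1, PQ2, PQ3]
    ring
  rw [e1, e2]; exact h

lemma hQ_2 (x y z : ℝ) : HasDerivAt (fun t => Qpoly x t z) (PQ2 x y z) y := by
  have h := hd4 (1) (0) (-2 * x ^ 2 - 2 * z ^ 2) (0) (x ^ 4 - 2 * x ^ 2 * z ^ 2 + z ^ 4 + 4 * z ^ 2) y
  have e1 : (fun t : ℝ => Qpoly x t z) = fun t =>
      (1) * t ^ 4 + (0) * t ^ 3 + (-2 * x ^ 2 - 2 * z ^ 2) * t ^ 2 + (0) * t + (x ^ 4 - 2 * x ^ 2 * z ^ 2 + z ^ 4 + 4 * z ^ 2) := by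
    funext t; try simp only [Qpoly, Spoly, PQ1, PQ2, PQ3]
    ring
  have e2 : (PQ2 x y z) = 4 * (1) * y ^ 3 + 3 * (0) * y ^ 2 + 2 * (-2 * x ^ 2 - 2 * z ^ 2) * y + (0) := by
    try simp only [PQ1, PQ2, PQ3]
    ring
  rw [e1, e2]; exact h

lemma hS_2 (x y z : ℝ) : HasDerivAt (fun t => Spoly x t z) (2 * y) y := by
  have h := hd4 (0) (0) (1) (0) (x ^ 2 - z ^ 2 - 2) y
  have e1 : (fun t : ℝ => Spoly x t z) = fun t =>
      (0) * t ^ 4 + (0) * t ^ 3 + (1) * t ^ 2 + (0) * t + (x ^ 2 - z ^ 2 - 2) := by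
    funext t; try simp only [Qpoly, Spoly, PQ1, PQ2, PQ3]
    ring
  have e2 : (2 * y) = 4 * (0) * y ^ 3 + 3 * (0) * y ^ 2 + 2 * (1) * y + (0) := by
    try simp only [PQ1, PQ2, PQ3]
    ring
  rw [e1, e2]; exact h

lemma hPQ1_2 (x y z : ℝ) : HasDerivAt (fun t => PQ1 x t z) (-8 * x * y) y := by
  have h := hd4 (0) (0) (-4 * x) (0) (4 * x ^ 3 - 4 * x * z ^ 2) y
  have e1 : (fun t : ℝ => PQ1 x t z) = fun t =>
      (0) * t ^ 4 + (0) * t ^ 3 + (-4 * x) * t ^ 2 + (0) * t + (4 * x ^ 3 - 4 * x * z ^ 2) := by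
    funext t; try simp only [Qpoly, Spoly, PQ1, PQ2, PQ3]
    ring
  have e2 : (-8 * x * y) = 4 * (0) * y ^ 3 + 3 * (0) * y ^ 2 + 2 * (-4 * x) * y + (0) := by
    try simp only [PQ1, PQ2, PQ3]
    ring
  rw [e1, e2]; exact h

lemma hPQ2_2 (x y z : ℝ) : HasDerivAt (fun t => PQ2 x t z) (12 * y ^ 2 - 4 * x ^ 2 - 4 * z ^ 2) y := by
  have h := hd4 (0) (4) (0) (-4 * x ^ 2 - 4 * z ^ 2) (0) y
  have e1 : (fun t : ℝ => PQ2 x t z) = fun t =>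
      (0) * t ^ 4 + (4) * t ^ 3 + (0) * t ^ 2 + (-4 * x ^ 2 - 4 * z ^ 2) * t + (0) := by
    funext t; try simp only [Qpoly, Spoly, PQ1, PQ2, PQ3]
    ring
  have e2 : (12 * y ^ 2 - 4 * x ^ 2 - 4 * z ^ 2) = 4 * (0) * y ^ 3 + 3 * (4) * y ^ 2 + 2 * (0) * y + (-4 * x ^ 2 - 4 * z ^ 2) := by
    try simp only [PQ1, PQ2, PQ3]
    ring
  rw [e1, e2]; exact h

lemma hPQ3_2 (x y z : ℝ) : HasDerivAt (fun t => PQ3 x t z) (-8 * y * z) y := by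
  have h := hd4 (0) (0) (-4 * z) (0) (4 * z ^ 3 - 4 * z * x ^ 2 + 8 * z) y
  have e1 : (fun t : ℝ => PQ3 x t z) = fun t =>
      (0) * t ^ 4 + (0) * t ^ 3 + (-4 * z) * t ^ 2 + (0) * t + (4 * z ^ 3 - 4 * z * x ^ 2 + 8 * z) := by
    funext t; try simp only [Qpoly, Spoly, PQ1, PQ2, PQ3]
    ring
  have e2 : (-8 * y * z) = 4 * (0) * y ^ 3 + 3 * (0) * y ^ 2 + 2 * (-4 * z) * y + (0) := by
    try simp only [PQ1, PQ2, PQ3]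
    ring
  rw [e1, e2]; exact h

lemma hQ_3 (x y z : ℝ) : HasDerivAt (fun t => Qpoly x y t) (PQ3 x y z) z := by
  have h := hd4 (1) (0) (-2 * x ^ 2 - 2 * y ^ 2 + 4) (0) (x ^ 4 - 2 * x ^ 2 * y ^ 2 + y ^ 4) z
  have e1 : (fun t : ℝ => Qpoly x y t) = fun t =>
      (1) * t ^ 4 + (0) * t ^ 3 + (-2 * x ^ 2 - 2 * y ^ 2 + 4) * t ^ 2 + (0) * t + (x ^ 4 - 2 * x ^ 2 * y ^ 2 + y ^ 4) := by
    funext t; try simp only [Qpoly, Spoly, PQ1, PQ2, PQ3]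
    ring
  have e2 : (PQ3 x y z) = 4 * (1) * z ^ 3 + 3 * (0) * z ^ 2 + 2 * (-2 * x ^ 2 - 2 * y ^ 2 + 4) * z + (0) := by
    try simp only [PQ1, PQ2, PQ3]
    ring
  rw [e1, e2]; exact h

lemma hS_3 (x y z : ℝ) : HasDerivAt (fun t => Spoly x y t) (-2 * z) z := by
  have h := hd4 (0) (0) (-1) (0) (x ^ 2 + y ^ 2 - 2) z
  have e1 : (fun t : ℝ => Spoly x y t) = fun t =>
      (0) * t ^ 4 + (0) * t ^ 3 + (-1) * t ^ 2 + (0) * t + (x ^ 2 + y ^ 2 - 2) := by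
    funext t; try simp only [Qpoly, Spoly, PQ1, PQ2, PQ3]
    ring
  have e2 : (-2 * z) = 4 * (0) * z ^ 3 + 3 * (0) * z ^ 2 + 2 * (-1) * z + (0) := by
    try simp only [PQ1, PQ2, PQ3]
    ring
  rw [e1, e2]; exact h

lemma hPQ1_3 (x y z : ℝ) : HasDerivAt (fun t => PQ1 x y t) (-8 * x * z) z := by
  have h := hd4 (0) (0) (-4 * x) (0) (4 * x ^ 3 - 4 * x * y ^ 2) z
  have e1 : (fun t : ℝ => PQ1 x y t) = fun t =>
      (0) * t ^ 4 + (0) * t ^ 3 + (-4 * x) * t ^ 2 + (0) * t + (4 * x ^ 3 - 4 * x * y ^ 2) := by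
    funext t; try simp only [Qpoly, Spoly, PQ1, PQ2, PQ3]
    ring
  have e2 : (-8 * x * z) = 4 * (0) * z ^ 3 + 3 * (0) * z ^ 2 + 2 * (-4 * x) * z + (0) := by
    try simp only [PQ1, PQ2, PQ3]
    ring
  rw [e1, e2]; exact h

lemma hPQ2_3 (x y z : ℝ) : HasDerivAt (fun t => PQ2 x y t) (-8 * y * z) z := by
  have h := hd4 (0) (0) (-4 * y) (0) (4 * y ^ 3 - 4 * y * x ^ 2) z
  have e1 : (fun t : ℝ => PQ2 x y t) = fun t =>
      (0) * t ^ 4 + (0) * t ^ 3 + (-4 * y) * t ^ 2 + (0) * t + (4 * y ^ 3 - 4 * y * x ^ 2) := by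
    funext t; try simp only [Qpoly, Spoly, PQ1, PQ2, PQ3]
    ring
  have e2 : (-8 * y * z) = 4 * (0) * z ^ 3 + 3 * (0) * z ^ 2 + 2 * (-4 * y) * z + (0) := by
    try simp only [PQ1, PQ2, PQ3]
    ring
  rw [e1, e2]; exact h

lemma hPQ3_3 (x y z : ℝ) : HasDerivAt (fun t => PQ3 x y t) (12 * z ^ 2 - 4 * x ^ 2 - 4 * y ^ 2 + 8) z := by
  have h := hd4 (0) (4) (0) (-4 * x ^ 2 - 4 * y ^ 2 + 8) (0) z
  have e1 : (fun t : ℝ => PQ3 x y t) = fun t =>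
      (0) * t ^ 4 + (4) * t ^ 3 + (0) * t ^ 2 + (-4 * x ^ 2 - 4 * y ^ 2 + 8) * t + (0) := by
    funext t; try simp only [Qpoly, Spoly, PQ1, PQ2, PQ3]
    ring
  have e2 : (12 * z ^ 2 - 4 * x ^ 2 - 4 * y ^ 2 + 8) = 4 * (0) * z ^ 3 + 3 * (4) * z ^ 2 + 2 * (0) * z + (-4 * x ^ 2 - 4 * y ^ 2 + 8) := by
    try simp only [PQ1, PQ2, PQ3]
    ring
  rw [e1, e2]; exact h

lemma hB1_1 (x y z : ℝ) : HasDerivAt (fun t : ℝ => 2 * t) (2 : ℝ) x := by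
  simpa using (hasDerivAt_id x).const_mul (2:ℝ)
lemma hB2_2 (x y z : ℝ) : HasDerivAt (fun t : ℝ => 2 * t) (2 : ℝ) y := by
  simpa using (hasDerivAt_id y).const_mul (2:ℝ)
lemma hB3_3 (x y z : ℝ) : HasDerivAt (fun t : ℝ => -2 * t) (-2 : ℝ) z := by
  simpa using (hasDerivAt_id z).const_mul (-2:ℝ)

noncomputable def F1f (x y z : ℝ) : ℝ :=
  Phi (Qpoly x y z) (Spoly x y z) (PQ1 x y z) (2 * x) (Ffun x y z)
noncomputable def F2f (x y z : ℝ) : ℝ :=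
  Phi (Qpoly x y z) (Spoly x y z) (PQ2 x y z) (2 * y) (Ffun x y z)
noncomputable def F3f (x y z : ℝ) : ℝ :=
  Phi (Qpoly x y z) (Spoly x y z) (PQ3 x y z) (-2 * z) (Ffun x y z)
noncomputable def F11v (x y z : ℝ) : ℝ :=
  Psi (Qpoly x y z) (Spoly x y z) (PQ1 x y z) (2 * x) (PQ1 x y z) (2 * x) (12 * x ^ 2 - 4 * y ^ 2 - 4 * z ^ 2) 2 (Ffun x y z)
noncomputable def F21v (x y z : ℝ) : ℝ :=
  Psi (Qpoly x y z) (Spoly x y z) (PQ2 x y z) (2 * y) (PQ1 x y z) (2 * x) (-8 * x * y) 0 (Ffun x y z)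
noncomputable def F31v (x y z : ℝ) : ℝ :=
  Psi (Qpoly x y z) (Spoly x y z) (PQ3 x y z) (-2 * z) (PQ1 x y z) (2 * x) (-8 * x * z) 0 (Ffun x y z)
noncomputable def F12v (x y z : ℝ) : ℝ :=
  Psi (Qpoly x y z) (Spoly x y z) (PQ1 x y z) (2 * x) (PQ2 x y z) (2 * y) (-8 * x * y) 0 (Ffun x y z)
noncomputable def F22v (x y z : ℝ) : ℝ :=
  Psi (Qpoly x y z) (Spoly x y z) (PQ2 x y z) (2 * y) (PQ2 x y z) (2 * y) (12 * y ^ 2 - 4 * x ^ 2 - 4 * z ^ 2) 2 (Ffun x y z)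
noncomputable def F32v (x y z : ℝ) : ℝ :=
  Psi (Qpoly x y z) (Spoly x y z) (PQ3 x y z) (-2 * z) (PQ2 x y z) (2 * y) (-8 * y * z) 0 (Ffun x y z)
noncomputable def F13v (x y z : ℝ) : ℝ :=
  Psi (Qpoly x y z) (Spoly x y z) (PQ1 x y z) (2 * x) (PQ3 x y z) (-2 * z) (-8 * x * z) 0 (Ffun x y z)
noncomputable def F23v (x y z : ℝ) : ℝ :=
  Psi (Qpoly x y z) (Spoly x y z) (PQ2 x y z) (2 * y) (PQ3 x y z) (-2 * z) (-8 * y * z) 0 (Ffun x y z)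
noncomputable def F33v (x y z : ℝ) : ℝ :=
  Psi (Qpoly x y z) (Spoly x y z) (PQ3 x y z) (-2 * z) (PQ3 x y z) (-2 * z) (12 * z ^ 2 - 4 * x ^ 2 - 4 * y ^ 2 + 8) (-2) (Ffun x y z)

lemma hdF_1 {x y z : ℝ} (hq : 0 < Qpoly x y z) (hs : Spoly x y z ≠ 0)
    (hlt : Qpoly x y z < Spoly x y z ^ 2) :
    HasDerivAt (fun t => Ffun t y z) (F1f x y z) x := by
  have h := hasDerivAt_W (hQ_1 x y z) (hS_1 x y z) hq hs hlt
  simpa only [Ffun, F1f] using h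

lemma hdF_2 {x y z : ℝ} (hq : 0 < Qpoly x y z) (hs : Spoly x y z ≠ 0)
    (hlt : Qpoly x y z < Spoly x y z ^ 2) :
    HasDerivAt (fun t => Ffun x t z) (F2f x y z) y := by
  have h := hasDerivAt_W (hQ_2 x y z) (hS_2 x y z) hq hs hlt
  simpa only [Ffun, F2f] using h

lemma hdF_3 {x y z : ℝ} (hq : 0 < Qpoly x y z) (hs : Spoly x y z ≠ 0)
    (hlt : Qpoly x y z < Spoly x y z ^ 2) :
    HasDerivAt (fun t => Ffun x y t) (F3f x y z) z := by
  have h := hasDerivAt_W (hQ_3 x y z) (hS_3 x y z) hq hs hlt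
  simpa only [Ffun, F3f] using h

lemma hdF_11 {x y z : ℝ} (hq : 0 < Qpoly x y z) (hs : Spoly x y z ≠ 0)
    (hlt : Qpoly x y z < Spoly x y z ^ 2) :
    HasDerivAt (fun t => F1f t y z) (F11v x y z) x := by
  have h := hasDerivAt_Phi (hQ_1 x y z) (hS_1 x y z) (hPQ1_1 x y z) (hB1_1 x y z) hq hs hlt
  simpa only [F1f, F11v, Ffun] using h

lemma hdF_21 {x y z : ℝ} (hq : 0 < Qpoly x y z) (hs : Spoly x y z ≠ 0)
    (hlt : Qpoly x y z < Spoly x y z ^ 2) :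
    HasDerivAt (fun t => F2f t y z) (F21v x y z) x := by
  have h := hasDerivAt_Phi (hQ_1 x y z) (hS_1 x y z) (hPQ2_1 x y z) (hasDerivAt_const x (2 * y)) hq hs hlt
  simpa only [F2f, F21v, Ffun] using h

lemma hdF_31 {x y z : ℝ} (hq : 0 < Qpoly x y z) (hs : Spoly x y z ≠ 0)
    (hlt : Qpoly x y z < Spoly x y z ^ 2) :
    HasDerivAt (fun t => F3f t y z) (F31v x y z) x := by
  have h := hasDerivAt_Phi (hQ_1 x y z) (hS_1 x y z) (hPQ3_1 x y z) (hasDerivAt_const x (-2 * z)) hq hs hlt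
  simpa only [F3f, F31v, Ffun] using h

lemma hdF_12 {x y z : ℝ} (hq : 0 < Qpoly x y z) (hs : Spoly x y z ≠ 0)
    (hlt : Qpoly x y z < Spoly x y z ^ 2) :
    HasDerivAt (fun t => F1f x t z) (F12v x y z) y := by
  have h := hasDerivAt_Phi (hQ_2 x y z) (hS_2 x y z) (hPQ1_2 x y z) (hasDerivAt_const y (2 * x)) hq hs hlt
  simpa only [F1f, F12v, Ffun] using h

lemma hdF_22 {x y z : ℝ} (hq : 0 < Qpoly x y z) (hs : Spoly x y z ≠ 0)
    (hlt : Qpoly x y z < Spoly x y z ^ 2) :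
    HasDerivAt (fun t => F2f x t z) (F22v x y z) y := by
  have h := hasDerivAt_Phi (hQ_2 x y z) (hS_2 x y z) (hPQ2_2 x y z) (hB2_2 x y z) hq hs hlt
  simpa only [F2f, F22v, Ffun] using h

lemma hdF_32 {x y z : ℝ} (hq : 0 < Qpoly x y z) (hs : Spoly x y z ≠ 0)
    (hlt : Qpoly x y z < Spoly x y z ^ 2) :
    HasDerivAt (fun t => F3f x t z) (F32v x y z) y := by
  have h := hasDerivAt_Phi (hQ_2 x y z) (hS_2 x y z) (hPQ3_2 x y z) (hasDerivAt_const y (-2 * z)) hq hs hlt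
  simpa only [F3f, F32v, Ffun] using h

lemma hdF_13 {x y z : ℝ} (hq : 0 < Qpoly x y z) (hs : Spoly x y z ≠ 0)
    (hlt : Qpoly x y z < Spoly x y z ^ 2) :
    HasDerivAt (fun t => F1f x y t) (F13v x y z) z := by
  have h := hasDerivAt_Phi (hQ_3 x y z) (hS_3 x y z) (hPQ1_3 x y z) (hasDerivAt_const z (2 * x)) hq hs hlt
  simpa only [F1f, F13v, Ffun] using h

lemma hdF_23 {x y z : ℝ} (hq : 0 < Qpoly x y z) (hs : Spoly x y z ≠ 0)
    (hlt : Qpoly x y z < Spoly x y z ^ 2) :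
    HasDerivAt (fun t => F2f x y t) (F23v x y z) z := by
  have h := hasDerivAt_Phi (hQ_3 x y z) (hS_3 x y z) (hPQ2_3 x y z) (hasDerivAt_const z (2 * y)) hq hs hlt
  simpa only [F2f, F23v, Ffun] using h

lemma hdF_33 {x y z : ℝ} (hq : 0 < Qpoly x y z) (hs : Spoly x y z ≠ 0)
    (hlt : Qpoly x y z < Spoly x y z ^ 2) :
    HasDerivAt (fun t => F3f x y t) (F33v x y z) z := by
  have h := hasDerivAt_Phi (hQ_3 x y z) (hS_3 x y z) (hPQ3_3 x y z) (hB3_3 x y z) hq hs hlt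
  simpa only [F3f, F33v, Ffun] using h

lemma Q_lt_sq {x y z : ℝ} (hq : 0 < Qpoly x y z)
    (hlt : Real.sqrt (Qpoly x y z) < |Spoly x y z|) :
    Qpoly x y z < Spoly x y z ^ 2 := by
  nlinarith [Real.sq_sqrt hq.le, Real.sqrt_nonneg (Qpoly x y z), sq_abs (Spoly x y z),
    abs_nonneg (Spoly x y z)]

lemma isOpen_Uset : IsOpen Uset := by
  have hQc : Continuous fun v : ℝ × ℝ × ℝ => Qpoly v.1 v.2.1 v.2.2 := by
    unfold Qpoly; fun_prop
  have hSc : Continuous fun v : ℝ × ℝ × ℝ => Spoly v.1 v.2.1 v.2.2 := by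
    unfold Spoly; fun_prop
  have h1 : IsOpen {v : ℝ × ℝ × ℝ | v.1 ≠ 0} :=
    isOpen_ne.preimage continuous_fst
  have h2 : IsOpen {v : ℝ × ℝ × ℝ | v.2.1 ≠ 0} :=
    isOpen_ne.preimage (continuous_fst.comp continuous_snd)
  have h3 : IsOpen {v : ℝ × ℝ × ℝ | 0 < Qpoly v.1 v.2.1 v.2.2} :=
    isOpen_lt continuous_const hQc
  have h4 : IsOpen {v : ℝ × ℝ × ℝ | Spoly v.1 v.2.1 v.2.2 ≠ 0} :=
    isOpen_ne.preimage hSc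
  have h5 : IsOpen {v : ℝ × ℝ × ℝ |
      Real.sqrt (Qpoly v.1 v.2.1 v.2.2) < |Spoly v.1 v.2.1 v.2.2|} :=
    isOpen_lt (Real.continuous_sqrt.comp hQc) hSc.abs
  have : Uset = {v : ℝ × ℝ × ℝ | v.1 ≠ 0} ∩ ({v | v.2.1 ≠ 0} ∩
      ({v | 0 < Qpoly v.1 v.2.1 v.2.2} ∩ ({v | Spoly v.1 v.2.1 v.2.2 ≠ 0} ∩
      {v | Real.sqrt (Qpoly v.1 v.2.1 v.2.2) < |Spoly v.1 v.2.1 v.2.2|}))) := rfl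
  rw [this]
  exact h1.inter (h2.inter (h3.inter (h4.inter h5)))

lemma smooth_part : ContDiffOn ℝ (⊤ : ℕ∞) (fun v : ℝ × ℝ × ℝ => Ffun v.1 v.2.1 v.2.2) Uset := by
  intro v hv
  obtain ⟨hx, hy, hq, hs, hlt⟩ := hv
  apply ContDiffAt.contDiffWithinAt
  have hQ : ContDiffAt ℝ (⊤ : ℕ∞) (fun v : ℝ × ℝ × ℝ => Qpoly v.1 v.2.1 v.2.2) v := by
    unfold Qpoly; fun_prop
  have hS : ContDiffAt ℝ (⊤ : ℕ∞) (fun v : ℝ × ℝ × ℝ => Spoly v.1 v.2.1 v.2.2) v := by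
    unfold Spoly; fun_prop
  have hr0 : 0 < Real.sqrt (Qpoly v.1 v.2.1 v.2.2) := Real.sqrt_pos.mpr hq
  have hsq : ContDiffAt ℝ (⊤ : ℕ∞)
      (fun v : ℝ × ℝ × ℝ => Real.sqrt (Qpoly v.1 v.2.1 v.2.2)) v :=
    (Real.contDiffAt_sqrt hq.ne').comp v hQ
  have hu : ContDiffAt ℝ (⊤ : ℕ∞)
      (fun v : ℝ × ℝ × ℝ => Real.sqrt (Qpoly v.1 v.2.1 v.2.2) / Spoly v.1 v.2.1 v.2.2) v :=
    hsq.div hS hs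
  set u : ℝ × ℝ × ℝ → ℝ :=
    fun v => Real.sqrt (Qpoly v.1 v.2.1 v.2.2) / Spoly v.1 v.2.1 v.2.2 with hu_def
  have habs : |u v| < 1 := by
    have hS0 : 0 < |Spoly v.1 v.2.1 v.2.2| := abs_pos.mpr hs
    rw [hu_def]
    simp only [abs_div]
    rw [abs_of_nonneg (Real.sqrt_nonneg _)]
    rw [div_lt_one hS0]
    exact hlt
  have h1m : (0:ℝ) < 1 - u v := by
    have := abs_lt.mp habs
    linarith [this.2]
  have h1p : (0:ℝ) < 1 + u v := by
    have := abs_lt.mp habs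
    linarith [this.1]
  have hquot : ContDiffAt ℝ (⊤ : ℕ∞) (fun w : ℝ × ℝ × ℝ => (1 + u w) / (1 - u w)) v :=
    (contDiffAt_const.add hu).div (contDiffAt_const.sub hu) h1m.ne'
  have hlog : ContDiffAt ℝ (⊤ : ℕ∞) (fun w : ℝ × ℝ × ℝ => Real.log ((1 + u w) / (1 - u w))) v :=
    hquot.log (by positivity)
  have harc : ContDiffAt ℝ (⊤ : ℕ∞) (fun w : ℝ × ℝ × ℝ => arctanh (u w)) v := by
    simp only [arctanh]
    exact contDiffAt_const.mul hlog
  have hnum : ContDiffAt ℝ (⊤ : ℕ∞) (fun w : ℝ × ℝ × ℝ => -2 * arctanh (u w)) v :=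
    contDiffAt_const.mul harc
  have := hnum.div hsq hr0.ne'
  exact this

end AuxOmega

set_option maxHeartbeats 16000000 in
lemma final_alg (x y z w : ℝ) (hx : x ≠ 0) (hy : y ≠ 0)
    (hq : Qpoly x y z ≠ 0) (hD : Spoly x y z ^ 2 - Qpoly x y z ≠ 0) :
    Psi (Qpoly x y z) (Spoly x y z) (PQ1 x y z) (2 * x) (PQ1 x y z) (2 * x)
        (12 * x ^ 2 - 4 * y ^ 2 - 4 * z ^ 2) 2 w +
      Psi (Qpoly x y z) (Spoly x y z) (PQ2 x y z) (2 * y) (PQ2 x y z) (2 * y)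
        (12 * y ^ 2 - 4 * x ^ 2 - 4 * z ^ 2) 2 w +
      (x ^ 2 + y ^ 2 - z ^ 2) / (x * y) *
        Psi (Qpoly x y z) (Spoly x y z) (PQ2 x y z) (2 * y) (PQ1 x y z) (2 * x)
          (-8 * x * y) 0 w +
      2 / x * Phi (Qpoly x y z) (Spoly x y z) (PQ1 x y z) (2 * x) w +
      2 / y * Phi (Qpoly x y z) (Spoly x y z) (PQ2 x y z) (2 * y) w -
      (x * (Phi (Qpoly x y z) (Spoly x y z) (PQ1 x y z) (2 * x) w +
            x * Psi (Qpoly x y z) (Spoly x y z) (PQ1 x y z) (2 * x) (PQ1 x y z) (2 * x)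
              (12 * x ^ 2 - 4 * y ^ 2 - 4 * z ^ 2) 2 w +
            y * Psi (Qpoly x y z) (Spoly x y z) (PQ2 x y z) (2 * y) (PQ1 x y z) (2 * x)
              (-8 * x * y) 0 w +
            z * Psi (Qpoly x y z) (Spoly x y z) (PQ3 x y z) (-2 * z) (PQ1 x y z) (2 * x)
              (-8 * x * z) 0 w) +
        y * (Phi (Qpoly x y z) (Spoly x y z) (PQ2 x y z) (2 * y) w +
            x * Psi (Qpoly x y z) (Spoly x y z) (PQ1 x y z) (2 * x) (PQ2 x y z) (2 * y)
              (-8 * x * y) 0 w +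
            y * Psi (Qpoly x y z) (Spoly x y z) (PQ2 x y z) (2 * y) (PQ2 x y z) (2 * y)
              (12 * y ^ 2 - 4 * x ^ 2 - 4 * z ^ 2) 2 w +
            z * Psi (Qpoly x y z) (Spoly x y z) (PQ3 x y z) (-2 * z) (PQ2 x y z) (2 * y)
              (-8 * y * z) 0 w) +
        z * (Phi (Qpoly x y z) (Spoly x y z) (PQ3 x y z) (-2 * z) w +
            x * Psi (Qpoly x y z) (Spoly x y z) (PQ1 x y z) (2 * x) (PQ3 x y z) (-2 * z)
              (-8 * x * z) 0 w +
            y * Psi (Qpoly x y z) (Spoly x y z) (PQ2 x y z) (2 * y) (PQ3 x y z) (-2 * z)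
              (-8 * y * z) 0 w +
            z * Psi (Qpoly x y z) (Spoly x y z) (PQ3 x y z) (-2 * z) (PQ3 x y z) (-2 * z)
              (12 * z ^ 2 - 4 * x ^ 2 - 4 * y ^ 2 + 8) (-2) w) +
        5 * (x * Phi (Qpoly x y z) (Spoly x y z) (PQ1 x y z) (2 * x) w +
          y * Phi (Qpoly x y z) (Spoly x y z) (PQ2 x y z) (2 * y) w +
          z * Phi (Qpoly x y z) (Spoly x y z) (PQ3 x y z) (-2 * z) w) +
        6 * w) = 0 := by
  have hD2 : Qpoly x y z * (Spoly x y z ^ 2 - Qpoly x y z) ≠ 0 := mul_ne_zero hq hD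
  have hG : x * y * (4 * Qpoly x y z ^ 3 * (Spoly x y z ^ 2 - Qpoly x y z) ^ 2) ≠ 0 := by
    apply mul_ne_zero (mul_ne_zero hx hy)
    apply mul_ne_zero (mul_ne_zero (by norm_num) (pow_ne_zero _ hq)) (pow_ne_zero _ hD)
  -- abbreviations (purely notational)
  have hphiG : ∀ A B w' : ℝ, Phi (Qpoly x y z) (Spoly x y z) A B w' =
      (x * y * (2 * Qpoly x y z ^ 2 * (Spoly x y z ^ 2 - Qpoly x y z)) *
        (2 * (-Spoly x y z * A + 2 * Qpoly x y z * B) -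
          A * (Spoly x y z ^ 2 - Qpoly x y z) * w')) /
      (x * y * (4 * Qpoly x y z ^ 3 * (Spoly x y z ^ 2 - Qpoly x y z) ^ 2)) := by
    intro A B w'
    simp only [Phi]
    field_simp
    ring
  have hpsiG : ∀ A B qd sd ad bd w' : ℝ,
      Psi (Qpoly x y z) (Spoly x y z) A B qd sd ad bd w' =
      (x * y *
        (4 * Qpoly x y z *
            ((-sd * A + -Spoly x y z * ad + (2 * qd * B + 2 * Qpoly x y z * bd)) *
                (Qpoly x y z * (Spoly x y z ^ 2 - Qpoly x y z)) -
              (-Spoly x y z * A + 2 * Qpoly x y z * B) *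
                (qd * (Spoly x y z ^ 2 - Qpoly x y z) +
                  Qpoly x y z * (2 * Spoly x y z * sd - qd))) -
          (ad * (2 * Qpoly x y z) - A * (2 * qd)) * Qpoly x y z *
            (Spoly x y z ^ 2 - Qpoly x y z) ^ 2 * w' -
          A * (2 * (-Spoly x y z * qd + 2 * Qpoly x y z * sd) -
              qd * (Spoly x y z ^ 2 - Qpoly x y z) * w') * Qpoly x y z *
            (Spoly x y z ^ 2 - Qpoly x y z))) /
      (x * y * (4 * Qpoly x y z ^ 3 * (Spoly x y z ^ 2 - Qpoly x y z) ^ 2)) := by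
    intro A B qd sd ad bd w'
    simp only [Psi, Phi]
    field_simp
    ring
  have hc3 : ∀ A B qd sd ad bd w' : ℝ,
      (x ^ 2 + y ^ 2 - z ^ 2) / (x * y) *
        Psi (Qpoly x y z) (Spoly x y z) A B qd sd ad bd w' =
      ((x ^ 2 + y ^ 2 - z ^ 2) *
        (4 * Qpoly x y z *
            ((-sd * A + -Spoly x y z * ad + (2 * qd * B + 2 * Qpoly x y z * bd)) *
                (Qpoly x y z * (Spoly x y z ^ 2 - Qpoly x y z)) -
              (-Spoly x y z * A + 2 * Qpoly x y z * B) *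
                (qd * (Spoly x y z ^ 2 - Qpoly x y z) +
                  Qpoly x y z * (2 * Spoly x y z * sd - qd))) -
          (ad * (2 * Qpoly x y z) - A * (2 * qd)) * Qpoly x y z *
            (Spoly x y z ^ 2 - Qpoly x y z) ^ 2 * w' -
          A * (2 * (-Spoly x y z * qd + 2 * Qpoly x y z * sd) -
              qd * (Spoly x y z ^ 2 - Qpoly x y z) * w') * Qpoly x y z *
            (Spoly x y z ^ 2 - Qpoly x y z))) /
      (x * y * (4 * Qpoly x y z ^ 3 * (Spoly x y z ^ 2 - Qpoly x y z) ^ 2)) := by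
    intro A B qd sd ad bd w'
    rw [hpsiG]
    rw [div_mul_div_comm]
    rw [div_eq_div_iff (by exact mul_ne_zero (mul_ne_zero hx hy) hG) hG]
    ring
  have hc4 : ∀ A B w' : ℝ, 2 / x * Phi (Qpoly x y z) (Spoly x y z) A B w' =
      (y * (4 * Qpoly x y z ^ 2 * (Spoly x y z ^ 2 - Qpoly x y z)) *
        (2 * (-Spoly x y z * A + 2 * Qpoly x y z * B) -
          A * (Spoly x y z ^ 2 - Qpoly x y z) * w')) /
      (x * y * (4 * Qpoly x y z ^ 3 * (Spoly x y z ^ 2 - Qpoly x y z) ^ 2)) := by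
    intro A B w'
    rw [hphiG]
    rw [div_mul_div_comm]
    rw [div_eq_div_iff (by exact mul_ne_zero hx hG) hG]
    ring
  have hc5 : ∀ A B w' : ℝ, 2 / y * Phi (Qpoly x y z) (Spoly x y z) A B w' =
      (x * (4 * Qpoly x y z ^ 2 * (Spoly x y z ^ 2 - Qpoly x y z)) *
        (2 * (-Spoly x y z * A + 2 * Qpoly x y z * B) -
          A * (Spoly x y z ^ 2 - Qpoly x y z) * w')) /
      (x * y * (4 * Qpoly x y z ^ 3 * (Spoly x y z ^ 2 - Qpoly x y z) ^ 2)) := by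
    intro A B w'
    rw [hphiG]
    rw [div_mul_div_comm]
    rw [div_eq_div_iff (by exact mul_ne_zero hy hG) hG]
    ring
  have h6 : (6 : ℝ) * w = 6 * w *
      (x * y * (4 * Qpoly x y z ^ 3 * (Spoly x y z ^ 2 - Qpoly x y z) ^ 2)) /
      (x * y * (4 * Qpoly x y z ^ 3 * (Spoly x y z ^ 2 - Qpoly x y z) ^ 2)) := by
    rw [mul_div_assoc, div_self hG, mul_one]
  rw [h6]
  simp only [hc3, hc4, hc5]
  simp only [hpsiG, hphiG]
  simp only [← mul_div_assoc, ← add_div, div_sub_div_same]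
  rw [div_eq_zero_iff]
  left
  simp only [Qpoly, Spoly, PQ1, PQ2, PQ3]
  ring

set_option maxHeartbeats 4000000 in
/-- `F` is smooth on `U` and satisfies
`ℋF − (d(dF) + 5·dF + 6·F) = 0` at every point of `U`. -/
theorem Omega_minus_formula_satisfies_PDE :
    ContDiffOn ℝ (⊤ : ℕ∞) (fun v : ℝ × ℝ × ℝ => Ffun v.1 v.2.1 v.2.2) Uset ∧
    ∀ x y z : ℝ, (x, y, z) ∈ Uset →
      Hop Ffun x y z -
          (dOp (fun a b c => dOp Ffun a b c) x y z + 5 * dOp Ffun x y z +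
            6 * Ffun x y z) = 0 := by
  constructor
  · exact smooth_part
  · intro x y z hp
    obtain ⟨hx0, hy0, hq0, hs0, hlt00⟩ := hp
    have hx : x ≠ 0 := hx0
    have hy : y ≠ 0 := hy0
    have hq : 0 < Qpoly x y z := hq0
    have hs : Spoly x y z ≠ 0 := hs0
    have hlt0 : Real.sqrt (Qpoly x y z) < |Spoly x y z| := hlt00
    clear hx0 hy0 hq0 hs0 hlt00
    have hlt : Qpoly x y z < Spoly x y z ^ 2 := Q_lt_sq hq hlt0
    -- eventual membership along the three axes
    have hev1 : ∀ᶠ t in nhds x, (t, y, z) ∈ Uset := by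
      have hc : Continuous fun t : ℝ => ((t, y, z) : ℝ × ℝ × ℝ) := by fun_prop
      exact hc.continuousAt.eventually_mem
        (isOpen_Uset.mem_nhds ⟨hx, hy, hq, hs, hlt0⟩)
    have hev2 : ∀ᶠ t in nhds y, (x, t, z) ∈ Uset := by
      have hc : Continuous fun t : ℝ => ((x, t, z) : ℝ × ℝ × ℝ) := by fun_prop
      exact hc.continuousAt.eventually_mem
        (isOpen_Uset.mem_nhds ⟨hx, hy, hq, hs, hlt0⟩)
    have hev3 : ∀ᶠ t in nhds z, (x, y, t) ∈ Uset := by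
      have hc : Continuous fun t : ℝ => ((x, y, t) : ℝ × ℝ × ℝ) := by fun_prop
      exact hc.continuousAt.eventually_mem
        (isOpen_Uset.mem_nhds ⟨hx, hy, hq, hs, hlt0⟩)
    -- first partials at the point
    have E1 : q1 Ffun x y z = F1f x y z := (hdF_1 hq hs hlt).deriv
    have E2 : q2 Ffun x y z = F2f x y z := (hdF_2 hq hs hlt).deriv
    have E3 : q3 Ffun x y z = F3f x y z := (hdF_3 hq hs hlt).deriv
    -- eventual identification of first partials along each axis
    have ev11 : (fun t => q1 Ffun t y z) =ᶠ[nhds x] fun t => F1f t y z :=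
      hev1.mono fun t ht =>
        (hdF_1 ht.2.2.1 ht.2.2.2.1 (Q_lt_sq ht.2.2.1 ht.2.2.2.2)).deriv
    have ev21 : (fun t => q2 Ffun t y z) =ᶠ[nhds x] fun t => F2f t y z :=
      hev1.mono fun t ht =>
        (hdF_2 ht.2.2.1 ht.2.2.2.1 (Q_lt_sq ht.2.2.1 ht.2.2.2.2)).deriv
    have ev31 : (fun t => q3 Ffun t y z) =ᶠ[nhds x] fun t => F3f t y z :=
      hev1.mono fun t ht =>
        (hdF_3 ht.2.2.1 ht.2.2.2.1 (Q_lt_sq ht.2.2.1 ht.2.2.2.2)).deriv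
    have ev12 : (fun t => q1 Ffun x t z) =ᶠ[nhds y] fun t => F1f x t z :=
      hev2.mono fun t ht =>
        (hdF_1 ht.2.2.1 ht.2.2.2.1 (Q_lt_sq ht.2.2.1 ht.2.2.2.2)).deriv
    have ev22 : (fun t => q2 Ffun x t z) =ᶠ[nhds y] fun t => F2f x t z :=
      hev2.mono fun t ht =>
        (hdF_2 ht.2.2.1 ht.2.2.2.1 (Q_lt_sq ht.2.2.1 ht.2.2.2.2)).deriv
    have ev32 : (fun t => q3 Ffun x t z) =ᶠ[nhds y] fun t => F3f x t z :=
      hev2.mono fun t ht =>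
        (hdF_3 ht.2.2.1 ht.2.2.2.1 (Q_lt_sq ht.2.2.1 ht.2.2.2.2)).deriv
    have ev13 : (fun t => q1 Ffun x y t) =ᶠ[nhds z] fun t => F1f x y t :=
      hev3.mono fun t ht =>
        (hdF_1 ht.2.2.1 ht.2.2.2.1 (Q_lt_sq ht.2.2.1 ht.2.2.2.2)).deriv
    have ev23 : (fun t => q2 Ffun x y t) =ᶠ[nhds z] fun t => F2f x y t :=
      hev3.mono fun t ht =>
        (hdF_2 ht.2.2.1 ht.2.2.2.1 (Q_lt_sq ht.2.2.1 ht.2.2.2.2)).deriv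
    have ev33 : (fun t => q3 Ffun x y t) =ᶠ[nhds z] fun t => F3f x y t :=
      hev3.mono fun t ht =>
        (hdF_3 ht.2.2.1 ht.2.2.2.1 (Q_lt_sq ht.2.2.1 ht.2.2.2.2)).deriv
    -- second partials at the point
    have E11 : q1 (q1 Ffun) x y z = F11v x y z := by
      show deriv (fun t => q1 Ffun t y z) x = _
      rw [ev11.deriv_eq]
      exact (hdF_11 hq hs hlt).deriv
    have E22 : q2 (q2 Ffun) x y z = F22v x y z := by
      show deriv (fun t => q2 Ffun x t z) y = _
      rw [ev22.deriv_eq]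
      exact (hdF_22 hq hs hlt).deriv
    have E21 : q1 (q2 Ffun) x y z = F21v x y z := by
      show deriv (fun t => q2 Ffun t y z) x = _
      rw [ev21.deriv_eq]
      exact (hdF_21 hq hs hlt).deriv
    -- the Euler-operator second derivatives
    have Ed1 : q1 (fun a b c => dOp Ffun a b c) x y z =
        F1f x y z + x * F11v x y z + y * F21v x y z + z * F31v x y z := by
      show deriv (fun t => dOp Ffun t y z) x = _
      have hev : (fun t => dOp Ffun t y z) =ᶠ[nhds x]
          fun t => t * F1f t y z + (y * F2f t y z + z * F3f t y z) := by
        filter_upwards [ev11, ev21, ev31] with t h1 h2 h3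
        simp only [dOp, h1, h2, h3]; ring
      rw [hev.deriv_eq]
      have h : HasDerivAt (fun t => t * F1f t y z + (y * F2f t y z + z * F3f t y z))
          (1 * F1f x y z + x * F11v x y z +
            (y * F21v x y z + z * F31v x y z)) x :=
        ((hasDerivAt_id' x).mul (hdF_11 hq hs hlt)).add
          (((hdF_21 hq hs hlt).const_mul y).add ((hdF_31 hq hs hlt).const_mul z))
      rw [h.deriv]; ring
    have Ed2 : q2 (fun a b c => dOp Ffun a b c) x y z =
        F2f x y z + x * F12v x y z + y * F22v x y z + z * F32v x y z := by
      show deriv (fun t => dOp Ffun x t z) y = _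
      have hev : (fun t => dOp Ffun x t z) =ᶠ[nhds y]
          fun t => x * F1f x t z + t * F2f x t z + z * F3f x t z := by
        filter_upwards [ev12, ev22, ev32] with t h1 h2 h3
        simp only [dOp, h1, h2, h3]
      rw [hev.deriv_eq]
      have h : HasDerivAt (fun t => x * F1f x t z + t * F2f x t z + z * F3f x t z)
          (x * F12v x y z + (1 * F2f x y z + y * F22v x y z) +
            z * F32v x y z) y :=
        (((hdF_12 hq hs hlt).const_mul x).add
          ((hasDerivAt_id' y).mul (hdF_22 hq hs hlt))).add
          ((hdF_32 hq hs hlt).const_mul z)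
      rw [h.deriv]; ring
    have Ed3 : q3 (fun a b c => dOp Ffun a b c) x y z =
        F3f x y z + x * F13v x y z + y * F23v x y z + z * F33v x y z := by
      show deriv (fun t => dOp Ffun x y t) z = _
      have hev : (fun t => dOp Ffun x y t) =ᶠ[nhds z]
          fun t => x * F1f x y t + y * F2f x y t + t * F3f x y t := by
        filter_upwards [ev13, ev23, ev33] with t h1 h2 h3
        simp only [dOp, h1, h2, h3]
      rw [hev.deriv_eq]
      have h : HasDerivAt (fun t => x * F1f x y t + y * F2f x y t + t * F3f x y t)
          (x * F13v x y z + y * F23v x y z +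
            (1 * F3f x y z + z * F33v x y z)) z :=
        (((hdF_13 hq hs hlt).const_mul x).add ((hdF_23 hq hs hlt).const_mul y)).add
          ((hasDerivAt_id' z).mul (hdF_33 hq hs hlt))
      rw [h.deriv]; ring
    -- assemble
    rw [show Hop Ffun x y z = q1 (q1 Ffun) x y z + q2 (q2 Ffun) x y z +
        ((x ^ 2 + y ^ 2 - z ^ 2) / (x * y)) * q1 (q2 Ffun) x y z +
        (2 / x) * q1 Ffun x y z + (2 / y) * q2 Ffun x y z from rfl]
    rw [show dOp (fun a b c => dOp Ffun a b c) x y z =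
        x * q1 (fun a b c => dOp Ffun a b c) x y z +
        y * q2 (fun a b c => dOp Ffun a b c) x y z +
        z * q3 (fun a b c => dOp Ffun a b c) x y z from rfl]
    rw [show dOp Ffun x y z =
        x * q1 Ffun x y z + y * q2 Ffun x y z + z * q3 Ffun x y z from rfl]
    rw [E11, E22, E21, Ed1, Ed2, Ed3, E1, E2, E3]
    -- now a purely algebraic identity
    have hqne : Qpoly x y z ≠ 0 := hq.ne'
    have hDne : Spoly x y z ^ 2 - Qpoly x y z ≠ 0 := by nlinarith
    have key := final_alg x y z (Ffun x y z) hx hy hqne hDne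
    simp only [F11v, F22v, F21v, F12v, F31v, F32v, F13v, F23v, F33v, F1f, F2f, F3f]
    linear_combination key
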